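/- For every complex number a and every strict partition λ = (λ₁ > λ₂ > … > λ_ℓ > 0): Σ over addable cells (i,j) of S(λ) of w(i,j) minus Σ over removable cells (i,j) of S(λ) of w(i,j) equals 2|λ| + a/2, where w(i,j) := ε(i,j) · ((j−i+1)(j−i) + a)/2 with ε(i,j) = 1 if i = j and ε(i,j) = 2 if j > i, and |λ| = λ₁ + ⋯ + λ_ℓ. (This is the identity expressing that on the Schur graph with UD-self-dual multiplicities κ_S = 1 on edges that change the number of rows and κ_S = √2 on edges that do not, the function 𝗊_a(i,j)² = ((j−i+1)(j−i)+a)/2 satisfies the Kerov condition with parameter t = a/2.) -/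

import Mathlib

/-!
A strict partition is encoded by its row-length function `f`. Since the shifted diagram is a union
of row intervals starting on the diagonal, adding (removing) a cell to (from) the diagram of a
strict partition lengthens (shortens) exactly one row by one, and what results must again be
strictly decreasing; this identifies the addable and removable cells as the ends of certain rows.
The weight of a cell depends only on its content `n = j - i`; call it `W(n)`. Pairing the addable
cell of row `k + 1` with the removable cell of row `k`, each pair contributes
`W(f (k+1)) - W(f k) + 2 f k` (whichever of the two cells exist), so the sum telescopes to
`W(f ℓ) - W(f 0) + 2|λ|`; the addable cell `W(f 0)` of the first row and `W(0) = a/2` finish it.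
-/

open scoped BigOperators

namespace KerovSchur

/-- A strict partition: a strictly decreasing list of positive integers. -/
def IsStrictPartition (l : List ℕ) : Prop :=
  (∀ x ∈ l, 0 < x) ∧ l.Pairwise (· > ·)

/-- The shifted Young diagram `S(λ) = {(i,j) : 1 ≤ i ≤ ℓ, i ≤ j ≤ λ_i + i − 1}`
(cells indexed from `1`). -/
def ShiftedDiagram (l : List ℕ) : Set (ℕ × ℕ) :=
  {c | 1 ≤ c.1 ∧ c.1 ≤ l.length ∧ c.1 ≤ c.2 ∧ c.2 ≤ l.getD (c.1 - 1) 0 + c.1 - 1}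

/-- A cell `(i,j)` with `j ≥ i` is addable for the strict partition `λ` if it is not in
`S(λ)` and `S(λ) ∪ {(i,j)}` is the shifted diagram of a strict partition. -/
def ShiftedAddable (l : List ℕ) (c : ℕ × ℕ) : Prop :=
  c.1 ≤ c.2 ∧ c ∉ ShiftedDiagram l ∧
    ∃ m : List ℕ, IsStrictPartition m ∧ ShiftedDiagram m = insert c (ShiftedDiagram l)

/-- A cell is removable for the strict partition `λ` if it is in `S(λ)` and
`S(λ) ∖ {(i,j)}` is the shifted diagram of a strict partition. -/
def ShiftedRemovable (l : List ℕ) (c : ℕ × ℕ) : Prop :=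
  c ∈ ShiftedDiagram l ∧
    ∃ m : List ℕ, IsStrictPartition m ∧ ShiftedDiagram m = ShiftedDiagram l \ {c}

/-- The weight `w(i,j) = ε(i,j) ((j−i+1)(j−i) + a)/2`, with `ε = 1` on the diagonal and
`ε = 2` off the diagonal. -/
noncomputable def schurWeight (a : ℂ) (c : ℕ × ℕ) : ℂ :=
  (if c.1 = c.2 then 1 else 2) * ((((c.2 : ℂ) - (c.1 : ℂ) + 1) * ((c.2 : ℂ) - (c.1 : ℂ)) + a) / 2)

open Function

def rowLen (l : List ℕ) (k : ℕ) : ℕ := l.getD k 0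

/-- Rows are numbered from `1` in cells but from `0` in `f`: `f k` is the length of row `k + 1`. -/
def shiftedCells (f : ℕ → ℕ) : Set (ℕ × ℕ) :=
  {c | 1 ≤ c.1 ∧ c.1 ≤ c.2 ∧ c.2 < c.1 + f (c.1 - 1)}

def IsShiftedShape (f : ℕ → ℕ) : Prop := ∀ k, f (k + 1) ≠ 0 → f (k + 1) < f k

def CanGrow (f : ℕ → ℕ) (k : ℕ) : Prop := k = 0 ∨ f k + 1 < f (k - 1)

def CanShrink (f : ℕ → ℕ) (k : ℕ) : Prop :=
  f k ≠ 0 ∧ (f (k + 1) ≠ 0 → f (k + 1) + 1 < f k)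

section shiftedCells

variable {f g : ℕ → ℕ}

lemma mem_shiftedCells {c : ℕ × ℕ} :
    c ∈ shiftedCells f ↔ 1 ≤ c.1 ∧ c.1 ≤ c.2 ∧ c.2 < c.1 + f (c.1 - 1) :=
  Iff.rfl

lemma mk_add_mem_shiftedCells {k n : ℕ} : (k + 1, k + 1 + n) ∈ shiftedCells f ↔ n < f k := by
  simp only [mem_shiftedCells, Nat.add_sub_cancel]
  omega

lemma shiftedCells_update_succ (f : ℕ → ℕ) (k : ℕ) :
    shiftedCells (update f k (f k + 1)) = insert (k + 1, k + 1 + f k) (shiftedCells f) := by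
  ext ⟨i, j⟩
  simp only [mem_shiftedCells, Set.mem_insert_iff, Prod.mk.injEq]
  rcases eq_or_ne (i - 1) k with rfl | h
  · simp only [update_self]
    omega
  · simp only [update_of_ne h]
    omega

lemma shiftedCells_update_pred {k : ℕ} (hk : f k ≠ 0) :
    shiftedCells (update f k (f k - 1)) = shiftedCells f \ {(k + 1, k + f k)} := by
  ext ⟨i, j⟩
  simp only [mem_shiftedCells, Set.mem_sdiff, Set.mem_singleton_iff, Prod.mk.injEq]
  rcases eq_or_ne (i - 1) k with rfl | h
  · simp only [update_self]
    omega
  · simp only [update_of_ne h]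
    omega

lemma exists_mk_eq_of_mem_shiftedCells {c : ℕ × ℕ} (hc : c ∈ shiftedCells f) :
    ∃ k n, c = (k + 1, k + 1 + n) :=
  ⟨c.1 - 1, c.2 - c.1, by rw [mem_shiftedCells] at hc; ext <;> simp only <;> omega⟩

lemma eq_update_of_shiftedCells_eq_insert {c : ℕ × ℕ}
    (h : shiftedCells g = insert c (shiftedCells f)) (hc : c ∉ shiftedCells f) :
    ∃ k, c = (k + 1, k + 1 + f k) ∧ g = update f k (f k + 1) := by
  have hrow : ∀ k n, n < g k ↔ n < f k ∨ (k + 1, k + 1 + n) = c := by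
    intro k n
    rw [← mk_add_mem_shiftedCells, h, Set.mem_insert_iff, mk_add_mem_shiftedCells, or_comm]
  obtain ⟨k, d, rfl⟩ := exists_mk_eq_of_mem_shiftedCells (h ▸ Set.mem_insert c _)
  rw [mk_add_mem_shiftedCells] at hc
  have hd := hrow k d
  have hfk := hrow k (f k)
  have hfk1 := hrow k (f k + 1)
  simp only [Prod.mk.injEq, true_and, Nat.add_left_cancel_iff, or_true, iff_true] at hd hfk hfk1
  refine ⟨k, by congr 2; omega, funext fun n => ?_⟩
  rcases eq_or_ne n k with rfl | hn
  · rw [update_self]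
    omega
  · rw [update_of_ne hn]
    refine eq_of_forall_lt_iff fun m => ?_
    rw [hrow n m, Prod.mk.injEq]
    omega

lemma eq_update_of_shiftedCells_eq_diff {c : ℕ × ℕ}
    (h : shiftedCells g = shiftedCells f \ {c}) (hc : c ∈ shiftedCells f) :
    ∃ k, c = (k + 1, k + f k) ∧ g = update f k (f k - 1) := by
  have hrow : ∀ k n, n < g k ↔ n < f k ∧ (k + 1, k + 1 + n) ≠ c := by
    intro k n
    rw [← mk_add_mem_shiftedCells, h, Set.mem_sdiff, Set.mem_singleton_iff,
      mk_add_mem_shiftedCells]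
  obtain ⟨k, d, rfl⟩ := exists_mk_eq_of_mem_shiftedCells hc
  rw [mk_add_mem_shiftedCells] at hc
  have hd := hrow k d
  have hd' := hrow k (d - 1)
  have hfk := hrow k (f k - 1)
  simp only [ne_eq, Prod.mk.injEq, true_and, Nat.add_left_cancel_iff, not_true, and_false,
    iff_false] at hd hd' hfk
  refine ⟨k, by congr 1; omega, funext fun n => ?_⟩
  rcases eq_or_ne n k with rfl | hn
  · rw [update_self]
    omega
  · rw [update_of_ne hn]
    refine eq_of_forall_lt_iff fun m => ?_
    rw [hrow n m, ne_eq, Prod.mk.injEq]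
    omega

end shiftedCells

namespace IsShiftedShape

variable {f : ℕ → ℕ}

lemma lt_of_lt (hf : IsShiftedShape f) {i j : ℕ} (hij : i < j) (hj : f j ≠ 0) : f j < f i := by
  induction j, hij using Nat.le_induction with
  | base => exact hf i hj
  | succ j hij ih => exact (hf j hj).trans (ih (hf j hj).ne_bot)

lemma eq_zero_of_le (hf : IsShiftedShape f) {i j : ℕ} (hij : i ≤ j) (hi : f i = 0) :
    f j = 0 := by
  by_contra hj
  rcases hij.lt_or_eq with hij | rfl
  · exact Nat.not_lt_zero _ (hi ▸ hf.lt_of_lt hij hj)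
  · exact hj hi

lemma update_succ_iff (hf : IsShiftedShape f) {k : ℕ} :
    IsShiftedShape (update f k (f k + 1)) ↔ CanGrow f k := by
  rw [CanGrow]
  constructor
  · intro h
    cases k with
    | zero => exact Or.inl rfl
    | succ k =>
      have := h k
      rw [update_self, update_of_ne (by omega)] at this
      exact Or.inr (this (f (k + 1)).succ_ne_zero)
  · intro hk n
    by_cases h1 : n + 1 = k
    · subst h1
      rw [update_self, update_of_ne (by omega)]
      simpa using hk
    · rw [update_of_ne h1]
      by_cases h2 : n = k
      · subst h2
        rw [update_self]
        have := hf n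
        omega
      · rw [update_of_ne h2]
        exact hf n

lemma update_pred_iff (hf : IsShiftedShape f) {k : ℕ} (hk : f k ≠ 0) :
    IsShiftedShape (update f k (f k - 1)) ↔ CanShrink f k := by
  simp only [CanShrink, hk, ne_eq, not_false_eq_true, true_and]
  constructor
  · intro h
    have := h k
    rw [update_self, update_of_ne (by omega)] at this
    omega
  · intro hk' n
    by_cases h1 : n + 1 = k
    · subst h1
      rw [update_self, update_of_ne (by omega)]
      have := hf n hk
      omega
    · rw [update_of_ne h1]
      by_cases h2 : n = k
      · subst h2
        rw [update_self]
        omega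
      · rw [update_of_ne h2]
        exact hf n

end IsShiftedShape

lemma rowLen_of_lt {l : List ℕ} {k : ℕ} (hk : k < l.length) : rowLen l k = l[k] := by
  simp [rowLen, hk]

lemma rowLen_of_le {l : List ℕ} {k : ℕ} (hk : l.length ≤ k) : rowLen l k = 0 := by
  simp [rowLen, hk]

lemma shiftedDiagram_eq_shiftedCells (l : List ℕ) :
    ShiftedDiagram l = shiftedCells (rowLen l) := by
  ext ⟨i, j⟩
  simp only [ShiftedDiagram, Set.mem_ofPred_eq, mem_shiftedCells]
  rcases lt_or_ge (i - 1) l.length with h | h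
  · rw [rowLen]
    omega
  · rw [rowLen_of_le h]
    omega

lemma sum_range_rowLen (l : List ℕ) : ∑ k ∈ Finset.range l.length, rowLen l k = l.sum := by
  rw [Finset.sum_range, ← Fin.sum_univ_getElem]
  exact Finset.sum_congr rfl fun k _ => rowLen_of_lt k.2

namespace IsStrictPartition

variable {l : List ℕ}

lemma rowLen_eq_zero_iff (hl : IsStrictPartition l) {k : ℕ} :
    rowLen l k = 0 ↔ l.length ≤ k := by
  refine ⟨fun h => ?_, rowLen_of_le⟩
  by_contra hk
  rw [rowLen_of_lt (not_le.mp hk)] at h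
  exact (hl.1 _ (l.getElem_mem _)).ne' h

lemma isShiftedShape (hl : IsStrictPartition l) : IsShiftedShape (rowLen l) := by
  intro k hk
  have hk' : k + 1 < l.length := not_le.mp (mt hl.rowLen_eq_zero_iff.mpr hk)
  rw [rowLen_of_lt hk', rowLen_of_lt (by omega)]
  exact List.pairwise_iff_getElem.mp hl.2 k (k + 1) (by omega) hk' k.lt_succ_self

end IsStrictPartition

lemma IsShiftedShape.exists_isStrictPartition {f : ℕ → ℕ} (hf : IsShiftedShape f) {n : ℕ}
    (hn : f n = 0) : ∃ m, IsStrictPartition m ∧ rowLen m = f := by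
  classical
  have hex : ∃ k, f k = 0 := ⟨n, hn⟩
  set N := Nat.find hex
  have hpos : ∀ k < N, 0 < f k := fun k hk => Nat.pos_of_ne_zero (Nat.find_min hex hk)
  refine ⟨(List.range N).map f, ⟨?_, ?_⟩, funext fun k => ?_⟩
  · simp only [List.mem_map, List.mem_range]
    rintro _ ⟨k, hk, rfl⟩
    exact hpos k hk
  · refine List.pairwise_map.mpr (List.pairwise_lt_range.imp_of_mem ?_)
    intro i j _ hj hij
    exact hf.lt_of_lt hij (hpos j (List.mem_range.mp hj)).ne'
  · simp only [rowLen, List.getD_eq_getElem?_getD, List.getElem?_map]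
    rcases lt_or_ge k N with hk | hk
    · rw [List.getElem?_range hk]
      rfl
    · rw [List.getElem?_eq_none (by simpa using hk)]
      exact (hf.eq_zero_of_le hk (Nat.find_spec hex)).symm

lemma shiftedAddable_iff {l : List ℕ} (hl : IsStrictPartition l) {c : ℕ × ℕ} :
    ShiftedAddable l c ↔
      ∃ k, CanGrow (rowLen l) k ∧ c = (k + 1, k + 1 + rowLen l k) := by
  simp only [ShiftedAddable, shiftedDiagram_eq_shiftedCells]
  constructor
  · rintro ⟨-, hc, m, hm, hcells⟩
    obtain ⟨k, rfl, hmk⟩ := eq_update_of_shiftedCells_eq_insert hcells hc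
    exact ⟨k, hl.isShiftedShape.update_succ_iff.mp (hmk ▸ hm.isShiftedShape), rfl⟩
  · rintro ⟨k, hk, rfl⟩
    obtain ⟨m, hm, hmk⟩ := (hl.isShiftedShape.update_succ_iff.mpr hk).exists_isStrictPartition
      (n := l.length + k + 1) (by rw [update_of_ne (by omega), rowLen_of_le (by omega)])
    refine ⟨by simp, by simp [mk_add_mem_shiftedCells], m, hm, ?_⟩
    rw [hmk, shiftedCells_update_succ]

lemma shiftedRemovable_iff {l : List ℕ} (hl : IsStrictPartition l) {c : ℕ × ℕ} :
    ShiftedRemovable l c ↔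
      ∃ k, CanShrink (rowLen l) k ∧ c = (k + 1, k + rowLen l k) := by
  simp only [ShiftedRemovable, shiftedDiagram_eq_shiftedCells]
  constructor
  · rintro ⟨hc, m, hm, hcells⟩
    obtain ⟨k, rfl, hmk⟩ := eq_update_of_shiftedCells_eq_diff hcells hc
    have hk : rowLen l k ≠ 0 := by
      rw [mem_shiftedCells] at hc
      omega
    exact ⟨k, (hl.isShiftedShape.update_pred_iff hk).mp (hmk ▸ hm.isShiftedShape), rfl⟩
  · rintro ⟨k, hk, rfl⟩
    obtain ⟨m, hm, hmk⟩ :=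
      ((hl.isShiftedShape.update_pred_iff hk.1).mpr hk).exists_isStrictPartition
        (n := l.length + k + 1) (by rw [update_of_ne (by omega), rowLen_of_le (by omega)])
    refine ⟨?_, m, hm, ?_⟩
    · rw [mem_shiftedCells]
      simp only [Nat.add_sub_cancel]
      have := hk.1
      omega
    · rw [hmk, shiftedCells_update_pred hk.1]

lemma tsum_subtype_eq_sum_range {α M : Type*} [AddCommMonoid M] [TopologicalSpace M]
    {P : α → Prop} {Q : ℕ → Prop} [DecidablePred Q] {e : ℕ → α} (he : Injective e)
    {N : ℕ}
    (hP : ∀ c, P c ↔ ∃ k, Q k ∧ c = e k) (hQ : ∀ k, Q k → k < N) (g : α → M) :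
    ∑' c : {c // P c}, g c = ∑ k ∈ Finset.range N, if Q k then g (e k) else 0 := by
  classical
  have hs : ∀ c, P c ↔ c ∈ ((Finset.range N).filter Q).image e := by
    simp only [hP, Finset.mem_image, Finset.mem_filter, Finset.mem_range]
    exact fun c => ⟨fun ⟨k, hk, hc⟩ => ⟨k, ⟨hQ k hk, hk⟩, hc.symm⟩,
      fun ⟨k, ⟨_, hk⟩, hc⟩ => ⟨k, hk, hc.symm⟩⟩
  rw [← Finset.sum_filter, ← Finset.sum_image he.injOn, ← Finset.tsum_subtype]
  exact (Equiv.subtypeEquivRight hs).tsum_eq fun c => g c.1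

lemma schurWeight_mk_add (a : ℂ) (i n : ℕ) :
    schurWeight a (i, i + n) = schurWeight a (0, n) := by
  simp only [schurWeight, Nat.left_eq_add, Nat.cast_add, Nat.cast_zero, eq_comm (a := 0)]
  ring

/-- The addable cell of row `k + 2` and the removable cell of row `k + 1`, when they exist, have
contents `f (k + 1)` and `f k - 1`; in all cases their contribution telescopes. -/
lemma schurWeight_grow_sub_shrink (a : ℂ) {f : ℕ → ℕ} (hf : IsShiftedShape f) {k : ℕ}
    (hk : f k ≠ 0) [Decidable (CanGrow f (k + 1))] [Decidable (CanShrink f k)] :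
    ((if CanGrow f (k + 1) then schurWeight a (k + 1 + 1, k + 1 + 1 + f (k + 1)) else 0) -
      if CanShrink f k then schurWeight a (k + 1, k + f k) else 0) =
    schurWeight a (0, f (k + 1)) - schurWeight a (0, f k) + 2 * f k := by
  have hlt : f (k + 1) < f k := by
    by_cases h : f (k + 1) = 0
    · omega
    · exact hf k h
  obtain ⟨x, hx⟩ : ∃ x, f k = x + 1 := Nat.exists_eq_succ_of_ne_zero hk
  simp only [CanGrow, CanShrink, hk, Nat.add_sub_cancel, add_eq_zero, one_ne_zero, and_false,
    false_or, ne_eq, not_false_eq_true, true_and, schurWeight_mk_add,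
    show k + f k = k + 1 + x by omega]
  rw [hx] at hlt ⊢
  generalize f (k + 1) = y at hlt ⊢
  rcases (show y + 1 < x + 1 ∨ (y = x ∧ y ≠ 0) ∨ (y = 0 ∧ x = 0) by omega) with
    h | ⟨rfl, h⟩ | ⟨rfl, rfl⟩
  · have hx0 : 0 ≠ x := by omega
    simp [h, hx0, schurWeight]
    ring
  · simp [h, h.symm, schurWeight]
    ring
  · simp [schurWeight]
    ring

/-- for every `a ∈ ℂ` and every strict partition `λ`,
`Σ_{addable (i,j)} w(i,j) − Σ_{removable (i,j)} w(i,j) = 2|λ| + a/2`. -/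
theorem statement19 (a : ℂ) (l : List ℕ) (hl : IsStrictPartition l) :
    (∑' c : {c : ℕ × ℕ // ShiftedAddable l c}, schurWeight a c.1) -
      (∑' c : {c : ℕ × ℕ // ShiftedRemovable l c}, schurWeight a c.1)
    = 2 * (l.sum : ℂ) + a / 2 := by
  classical
  have hgrow : ∀ k, CanGrow (rowLen l) k → k < l.length + 1 := by
    intro k hk
    by_contra hlen
    have : rowLen l (k - 1) = 0 := rowLen_of_le (by omega)
    rcases hk with hk | hk <;> omega
  have hshrink : ∀ k, CanShrink (rowLen l) k → k < l.length := fun k hk =>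
    not_le.mp (mt hl.rowLen_eq_zero_iff.mpr hk.1)
  rw [tsum_subtype_eq_sum_range (Injective.of_comp (f := Prod.fst) (add_left_injective 1))
      (fun _ => shiftedAddable_iff hl) hgrow,
    tsum_subtype_eq_sum_range (Injective.of_comp (f := Prod.fst) (add_left_injective 1))
      (fun _ => shiftedRemovable_iff hl) hshrink,
    Finset.sum_range_succ', add_sub_right_comm, ← Finset.sum_sub_distrib,
    Finset.sum_congr rfl fun k hk => schurWeight_grow_sub_shrink a hl.isShiftedShape
      (mt hl.rowLen_eq_zero_iff.mp (not_le.mpr (Finset.mem_range.mp hk))),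
    Finset.sum_add_distrib, Finset.sum_range_sub (fun k => schurWeight a (0, rowLen l k)),
    ← Finset.mul_sum, ← Nat.cast_sum, sum_range_rowLen, rowLen_of_le le_rfl,
    if_pos (show CanGrow (rowLen l) 0 from Or.inl rfl), zero_add, schurWeight_mk_add,
    show schurWeight a (0, 0) = a / 2 by simp [schurWeight]]
  ring

end KerovSchur
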